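/- arXiv:2108.04564 — 3 statements merged into one kernel-verified Lean document; each statement's English description precedes it below -/
import Mathlib

section
/- For a finite simple graph G with an injective edge ranking π, there is at most one matching with the LFMM property. That is, if M₁ and M₂ are matchings in G such that every edge of G is either in Mᵢ or covered by Mᵢ (for i = 1, 2), then M₁ = M₂. -/
/-! If `M₁ ≠ M₂`, take an edge `e` of least rank in `M₁ ∆ M₂`, say `e ∈ M₁ \ M₂`. Being outside
`M₂`, it is covered by some `f ∈ M₂` of smaller rank; by minimality `f ∈ M₁` too, so `M₁` contains
the adjacent edges `e` and `f`, which is impossible for a matching. -/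

variable {V : Type*}

/-- Two distinct edges are adjacent if they share an endpoint. -/
def EdgeAdj (e f : Sym2 V) : Prop := e ≠ f ∧ ∃ v, v ∈ e ∧ v ∈ f

/-- `M` is a matching in `G`: a set of pairwise non-adjacent edges of `G`. -/
def IsMatchingIn (G : SimpleGraph V) (M : Set (Sym2 V)) : Prop :=
  M ⊆ G.edgeSet ∧ ∀ e ∈ M, ∀ f ∈ M, ¬ EdgeAdj e f

/-- The edge `f` is covered by `M` (w.r.t. the ranking `π`): some edge of `M`
is adjacent to `f` and has strictly smaller rank. -/
def CoveredBy (π : Sym2 V → ℝ) (M : Set (Sym2 V)) (f : Sym2 V) : Prop :=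
  ∃ e ∈ M, EdgeAdj e f ∧ π e < π f

/-- `M` has the LFMM property in `G`: it is a matching and every edge of `G`
is either in `M` or covered by `M`. -/
def HasLFMM (G : SimpleGraph V) (π : Sym2 V → ℝ) (M : Set (Sym2 V)) : Prop :=
  IsMatchingIn G M ∧ ∀ f ∈ G.edgeSet, f ∈ M ∨ CoveredBy π M f

namespace HasLFMM

variable {G : SimpleGraph V} {π : Sym2 V → ℝ} {M₁ M₂ : Set (Sym2 V)} {e : Sym2 V}

theorem mem_of_forall_lt_mem (hM₁ : IsMatchingIn G M₁) (h₂ : HasLFMM G π M₂) (he : e ∈ M₁)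
    (hbelow : ∀ f ∈ M₂, π f < π e → f ∈ M₁) : e ∈ M₂ := by
  rcases h₂.2 e (hM₁.1 he) with he₂ | ⟨f, hf, hfe, hlt⟩
  · exact he₂
  · exact (hM₁.2 f (hbelow f hf hlt) e he hfe).elim

theorem mem_iff_of_forall_lt (h₁ : HasLFMM G π M₁) (h₂ : HasLFMM G π M₂)
    (hagree : ∀ f, π f < π e → (f ∈ M₁ ↔ f ∈ M₂)) : e ∈ M₁ ↔ e ∈ M₂ :=
  ⟨fun he ↦ mem_of_forall_lt_mem h₁.1 h₂ he fun f hf hlt ↦ (hagree f hlt).2 hf,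
    fun he ↦ mem_of_forall_lt_mem h₂.1 h₁ he fun f hf hlt ↦ (hagree f hlt).1 hf⟩

end HasLFMM

open scoped symmDiff in
theorem lfmm_unique_general [Finite V] (G : SimpleGraph V) (π : Sym2 V → ℝ)
    (M₁ M₂ : Set (Sym2 V))
    (h₁ : HasLFMM G π M₁) (h₂ : HasLFMM G π M₂) : M₁ = M₂ := by
  by_contra hne
  have hD : (M₁ ∆ M₂).Nonempty :=
    Set.nonempty_iff_ne_empty.2 fun h ↦ hne (symmDiff_eq_bot.1 h)
  obtain ⟨e, he, hmin⟩ := Set.exists_min_image _ π (Set.toFinite _) hD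
  have hagree : ∀ f, π f < π e → (f ∈ M₁ ↔ f ∈ M₂) := fun f hlt ↦ by
    by_contra hf
    exact (hmin f (Set.mem_symmDiff.2 (by tauto))).not_gt hlt
  have hdisagree : ¬(e ∈ M₁ ↔ e ∈ M₂) := by
    rw [Set.mem_symmDiff] at he
    tauto
  exact hdisagree (h₁.mem_iff_of_forall_lt h₂ hagree)

/-- There is at most one matching with the LFMM property. -/
theorem lfmm_unique [Finite V] (G : SimpleGraph V) (π : Sym2 V → ℝ)
    (hπ : Set.InjOn π G.edgeSet) (M₁ M₂ : Set (Sym2 V))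
    (h₁ : HasLFMM G π M₁) (h₂ : HasLFMM G π M₂) : M₁ = M₂ :=
  lfmm_unique_general G π M₁ M₂ h₁ h₂
end

section
/- Let G be a finite simple graph with injective edge ranking π, let e be a new edge not in E, and extend π injectively to E ∪ {e}. If M is a matching with the LFMM property in G and M' is a matching with the LFMM property in G + e, then M and M' agree on all edges of rank less than π(e): for every f ∈ E with π(f) < π(e), f ∈ M if and only if f ∈ M'. That is, inserting an edge can only change the lexicographically first maximal matching on edges of larger rank. -/
variable {V : Type*}

/-!
An edge belongs to an LFMM exactly when no adjacent edge of smaller rank does, so membership of an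
edge is decided by membership of the edges ranked below it. By well-founded induction on the rank,
LFMMs of two graphs with the same edges below rank `r` therefore agree below `r`; and `G` and
`G + e` have the same edges below `π e`.
-/

theorem HasLFMM.mem_iff_not_coveredBy {G : SimpleGraph V} {π : Sym2 V → ℝ} {M : Set (Sym2 V)}
    (hM : HasLFMM G π M) {f : Sym2 V} (hf : f ∈ G.edgeSet) :
    f ∈ M ↔ ¬ CoveredBy π M f := by
  refine ⟨?_, fun hnc => (hM.2 f hf).resolve_right hnc⟩
  rintro hfM ⟨g, hgM, hgf, -⟩
  exact hM.1.2 g hgM f hfM hgf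

theorem coveredBy_congr {π : Sym2 V → ℝ} {M M' : Set (Sym2 V)} {f : Sym2 V}
    (h : ∀ g, π g < π f → (g ∈ M ↔ g ∈ M')) : CoveredBy π M f ↔ CoveredBy π M' f :=
  exists_congr fun g => ⟨fun ⟨hgM, hgf, hlt⟩ => ⟨(h g hlt).1 hgM, hgf, hlt⟩,
    fun ⟨hgM', hgf, hlt⟩ => ⟨(h g hlt).2 hgM', hgf, hlt⟩⟩

/-- Well-foundedness cannot be dropped: on an infinite path ranked decreasingly, the odd and the
even edges are two different LFMMs. -/
theorem HasLFMM.mem_iff_of_edgeSet_agree_below {G G' : SimpleGraph V} {π : Sym2 V → ℝ}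
    {M M' : Set (Sym2 V)} (hwf : WellFounded fun a b : Sym2 V => π a < π b)
    (hM : HasLFMM G π M) (hM' : HasLFMM G' π M') {r : ℝ}
    (hGG' : ∀ g, π g < r → (g ∈ G.edgeSet ↔ g ∈ G'.edgeSet)) :
    ∀ f, π f < r → (f ∈ M ↔ f ∈ M') := by
  intro f
  induction f using hwf.induction with
  | _ f ih =>
    intro hfr
    by_cases hf : f ∈ G.edgeSet
    · have hf' : f ∈ G'.edgeSet := (hGG' f hfr).1 hf
      rw [hM.mem_iff_not_coveredBy hf, hM'.mem_iff_not_coveredBy hf',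
        coveredBy_congr fun g hgf => ih g hgf (hgf.trans hfr)]
    · have hf' : f ∉ G'.edgeSet := mt (hGG' f hfr).2 hf
      exact iff_of_false (fun h => hf (hM.1.1 h)) (fun h => hf' (hM'.1.1 h))

theorem SimpleGraph.mem_edgeSet_fromEdgeSet_insert_of_ne {G : SimpleGraph V} {e f : Sym2 V}
    (hfe : f ≠ e) : f ∈ (fromEdgeSet (insert e G.edgeSet)).edgeSet ↔ f ∈ G.edgeSet := by
  rw [edgeSet_fromEdgeSet, Set.mem_sdiff, Set.mem_insert_iff, or_iff_right hfe]
  exact and_iff_left_of_imp fun hf => G.not_isDiag_of_mem_edgeSet hf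

theorem lfmm_insert_agree_below_general [Finite V] (G : SimpleGraph V) (π : Sym2 V → ℝ)
    (M M' : Set (Sym2 V)) (u v : V)
    (hM : HasLFMM G π M)
    (hM' : HasLFMM (SimpleGraph.fromEdgeSet (insert s(u, v) G.edgeSet)) π M') :
    ∀ f ∈ G.edgeSet, π f < π s(u, v) → (f ∈ M ↔ f ∈ M') := fun f _ hf =>
  hM.mem_iff_of_edgeSet_agree_below (Finite.wellFounded_of_trans_of_irrefl _) hM'
    (fun _ hg => (SimpleGraph.mem_edgeSet_fromEdgeSet_insert_of_ne (ne_of_apply_ne π hg.ne)).symm)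
    f hf

/-- Inserting an edge can only change the LFMM on edges of larger rank. -/
theorem lfmm_insert_agree_below [Finite V] (G : SimpleGraph V) (π : Sym2 V → ℝ)
    (M M' : Set (Sym2 V)) (u v : V) (huv : u ≠ v) (he : s(u, v) ∉ G.edgeSet)
    (hπ : Set.InjOn π (insert s(u, v) G.edgeSet))
    (hM : HasLFMM G π M)
    (hM' : HasLFMM (SimpleGraph.fromEdgeSet (insert s(u, v) G.edgeSet)) π M') :
    ∀ f ∈ G.edgeSet, π f < π s(u, v) → (f ∈ M ↔ f ∈ M') :=
  lfmm_insert_agree_below_general G π M M' u v hM hM'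
end

section
/- Let G be a finite simple graph with injective edge ranking π and let M be a matching with the LFMM property in G. Let e = {u, v} be a new edge not in E, with π extended injectively to E ∪ {e}, and suppose π(e) < π(f) for every edge f ∈ M incident to u or v. Let D be the set of edges of M incident to u or v (so |D| ≤ 2) and set M' = (M \ D) ∪ {e}. Then M' is a matching in G + e, and every edge f ∈ (E ∪ {e}) \ M' that is not covered by M' is adjacent to some edge d ∈ D at the endpoint of d other than u or v, and satisfies π(f) > π(d) > π(e). In particular, all edges of rank at most π(e) are covered by M' in G + e. -/
variable {V : Type*}

/-!
Removing the matching edges at `u` and `v` frees both endpoints, so `e = s(u, v)` can be added.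
An edge `f` left uncovered is not in `M`: otherwise it was removed, and `e`, being cheaper than
every removed edge, covers it. So `f` is covered in `M` by some `d`, which no longer covers it,
hence was removed: `π e < π d < π f`. Then `f` cannot meet `e`, which would cover it, so it
meets `d` at the endpoint other than `u` and `v`.
-/

lemma EdgeAdj.symm {e f : Sym2 V} (h : EdgeAdj e f) : EdgeAdj f e :=
  ⟨h.1.symm, h.2.imp fun _ hw => hw.symm⟩

lemma edgeSet_fromEdgeSet_insert_edgeSet (G : SimpleGraph V) {u v : V} (huv : u ≠ v) :
    (SimpleGraph.fromEdgeSet (insert s(u, v) G.edgeSet)).edgeSet = insert s(u, v) G.edgeSet := by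
  rw [SimpleGraph.edgeSet_fromEdgeSet, sdiff_eq_left, Set.disjoint_insert_left]
  exact ⟨by simpa using huv,
    Set.subset_compl_iff_disjoint_right.mp G.edgeSet_subset_compl_diagSet⟩

lemma IsMatchingIn.subset {G : SimpleGraph V} {M N : Set (Sym2 V)} (hM : IsMatchingIn G M)
    (hNM : N ⊆ M) : IsMatchingIn G N :=
  ⟨hNM.trans hM.1, fun e he f hf => hM.2 e (hNM he) f (hNM hf)⟩

lemma IsMatchingIn.insert_edge {G H : SimpleGraph V} {M : Set (Sym2 V)} {e : Sym2 V}
    (hM : IsMatchingIn G M) (hH : insert e M ⊆ H.edgeSet)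
    (he : ∀ f ∈ M, ∀ w ∈ e, w ∉ f) : IsMatchingIn H (insert e M) := by
  have h_not_adj : ∀ f ∈ M, ¬ EdgeAdj e f :=
    fun f hf ⟨_, w, hwe, hwf⟩ => he f hf w hwe hwf
  refine ⟨hH, ?_⟩
  rintro a (rfl | ha) b (rfl | hb) hab
  · exact hab.1 rfl
  · exact h_not_adj b hb hab
  · exact h_not_adj a ha hab.symm
  · exact hM.2 a ha b hb hab

lemma coveredBy_insert_of_mem {π : Sym2 V → ℝ} {N : Set (Sym2 V)} {e f : Sym2 V} {w : V}
    (hwe : w ∈ e) (hwf : w ∈ f) (hef : e ≠ f) (hπ : π e < π f) :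
    CoveredBy π (insert e N) f :=
  ⟨e, Set.mem_insert _ _, ⟨hef, w, hwe, hwf⟩, hπ⟩

def incidentEdges (M : Set (Sym2 V)) (u v : V) : Set (Sym2 V) := {d ∈ M | u ∈ d ∨ v ∈ d}

section Insertion

variable {G : SimpleGraph V} {π : Sym2 V → ℝ} {M : Set (Sym2 V)} {u v : V}

lemma IsMatchingIn.insert_diff_incident (hM : IsMatchingIn G M) (huv : u ≠ v) :
    IsMatchingIn (SimpleGraph.fromEdgeSet (insert s(u, v) G.edgeSet))
      (insert s(u, v) (M \ incidentEdges M u v)) := by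
  refine (hM.subset Set.sdiff_subset).insert_edge ?_ ?_
  · rw [edgeSet_fromEdgeSet_insert_edgeSet G huv]
    exact Set.insert_subset_insert (Set.sdiff_subset.trans hM.1)
  · rintro f ⟨hfM, hfD⟩ w hw hwf
    rcases Sym2.mem_iff.mp hw with rfl | rfl
    · exact hfD ⟨hfM, Or.inl hwf⟩
    · exact hfD ⟨hfM, Or.inr hwf⟩

lemma exists_incident_of_not_coveredBy_insert_diff_incident
    (hcov : ∀ f ∈ G.edgeSet, f ∈ M ∨ CoveredBy π M f)
    (hrank : ∀ f ∈ M, (u ∈ f ∨ v ∈ f) → π s(u, v) < π f)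
    {f : Sym2 V} (hf : f ∈ insert s(u, v) G.edgeSet)
    (hfM' : f ∉ insert s(u, v) (M \ incidentEdges M u v))
    (hfcov : ¬ CoveredBy π (insert s(u, v) (M \ incidentEdges M u v)) f) :
    ∃ d ∈ incidentEdges M u v, (∃ w, w ∈ d ∧ w ∈ f ∧ w ≠ u ∧ w ≠ v) ∧
      π s(u, v) < π d ∧ π d < π f := by
  have hfe : f ≠ s(u, v) := by rintro rfl; exact hfM' (Set.mem_insert _ _)
  have hfG : f ∈ G.edgeSet := hf.resolve_left hfe
  have he_not_covers : ∀ w ∈ s(u, v), w ∈ f → ¬ π s(u, v) < π f :=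
    fun w hw hwf hlt => hfcov (coveredBy_insert_of_mem hw hwf hfe.symm hlt)
  have hfM : f ∉ M := by
    intro hfM
    have hfD : u ∈ f ∨ v ∈ f := by
      by_contra hfD
      exact hfM' (Set.mem_insert_of_mem _ ⟨hfM, fun h => hfD h.2⟩)
    rcases hfD with h | h
    · exact he_not_covers u (Sym2.mem_mk_left u v) h (hrank f hfM (Or.inl h))
    · exact he_not_covers v (Sym2.mem_mk_right u v) h (hrank f hfM (Or.inr h))
  obtain ⟨d, hdM, hdf, hπdf⟩ := (hcov f hfG).resolve_left hfM
  obtain ⟨w, hwd, hwf⟩ := hdf.2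
  have hdD : u ∈ d ∨ v ∈ d := by
    by_contra hdD
    have hd' : d ∈ M \ incidentEdges M u v := ⟨hdM, fun h => hdD h.2⟩
    exact hfcov ⟨d, Set.mem_insert_of_mem _ hd', hdf, hπdf⟩
  have hπed : π s(u, v) < π d := hrank d hdM hdD
  have hwu : w ≠ u := by
    rintro rfl; exact he_not_covers w (Sym2.mem_mk_left w v) hwf (hπed.trans hπdf)
  have hwv : w ≠ v := by
    rintro rfl; exact he_not_covers w (Sym2.mem_mk_right u w) hwf (hπed.trans hπdf)
  exact ⟨d, ⟨hdM, hdD⟩, ⟨w, hwd, hwf, hwu, hwv⟩, hπed, hπdf⟩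

end Insertion

theorem lfmm_insert_low_rank_general (G : SimpleGraph V) (π : Sym2 V → ℝ)
    (M : Set (Sym2 V)) (u v : V) (huv : u ≠ v)
    (hM : HasLFMM G π M)
    (hrank : ∀ f ∈ M, (u ∈ f ∨ v ∈ f) → π s(u, v) < π f) :
    IsMatchingIn (SimpleGraph.fromEdgeSet (insert s(u, v) G.edgeSet))
        (insert s(u, v) (M \ {d ∈ M | u ∈ d ∨ v ∈ d})) ∧
    (∀ f ∈ (SimpleGraph.fromEdgeSet (insert s(u, v) G.edgeSet)).edgeSet,
        f ∉ insert s(u, v) (M \ {d ∈ M | u ∈ d ∨ v ∈ d}) →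
        ¬ CoveredBy π (insert s(u, v) (M \ {d ∈ M | u ∈ d ∨ v ∈ d})) f →
        ∃ d ∈ {d ∈ M | u ∈ d ∨ v ∈ d},
          (∃ w, w ∈ d ∧ w ∈ f ∧ w ≠ u ∧ w ≠ v) ∧ π s(u, v) < π d ∧ π d < π f) ∧
    (∀ f ∈ (SimpleGraph.fromEdgeSet (insert s(u, v) G.edgeSet)).edgeSet,
        π f ≤ π s(u, v) →
        f ∈ insert s(u, v) (M \ {d ∈ M | u ∈ d ∨ v ∈ d}) ∨
        CoveredBy π (insert s(u, v) (M \ {d ∈ M | u ∈ d ∨ v ∈ d})) f) := by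
  rw [edgeSet_fromEdgeSet_insert_edgeSet G huv]
  have uncovered := fun f (hf : f ∈ insert s(u, v) G.edgeSet) =>
    exists_incident_of_not_coveredBy_insert_diff_incident (π := π) hM.2 hrank hf
  refine ⟨IsMatchingIn.insert_diff_incident hM.1 huv, uncovered, fun f hf hπf => ?_⟩
  by_contra! h
  obtain ⟨d, -, -, hed, hdf⟩ := uncovered f hf h.1 h.2
  linarith

/-- Inserting an edge of lower rank than all matching edges at its endpoints:
`M' = (M \ D) ∪ {e}` is a matching in `G + e`, any uncovered edge is adjacent
to some `d ∈ D` at the endpoint of `d` other than `u, v` with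
`π f > π d > π e`; in particular all edges of rank at most `π e` are covered. -/
theorem lfmm_insert_low_rank [Finite V] (G : SimpleGraph V) (π : Sym2 V → ℝ)
    (M : Set (Sym2 V)) (u v : V) (huv : u ≠ v) (he : s(u, v) ∉ G.edgeSet)
    (hπ : Set.InjOn π (insert s(u, v) G.edgeSet))
    (hM : HasLFMM G π M)
    (hrank : ∀ f ∈ M, (u ∈ f ∨ v ∈ f) → π s(u, v) < π f) :
    IsMatchingIn (SimpleGraph.fromEdgeSet (insert s(u, v) G.edgeSet))
        (insert s(u, v) (M \ {d ∈ M | u ∈ d ∨ v ∈ d})) ∧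
    (∀ f ∈ (SimpleGraph.fromEdgeSet (insert s(u, v) G.edgeSet)).edgeSet,
        f ∉ insert s(u, v) (M \ {d ∈ M | u ∈ d ∨ v ∈ d}) →
        ¬ CoveredBy π (insert s(u, v) (M \ {d ∈ M | u ∈ d ∨ v ∈ d})) f →
        ∃ d ∈ {d ∈ M | u ∈ d ∨ v ∈ d},
          (∃ w, w ∈ d ∧ w ∈ f ∧ w ≠ u ∧ w ≠ v) ∧ π s(u, v) < π d ∧ π d < π f) ∧
    (∀ f ∈ (SimpleGraph.fromEdgeSet (insert s(u, v) G.edgeSet)).edgeSet,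
        π f ≤ π s(u, v) →
        f ∈ insert s(u, v) (M \ {d ∈ M | u ∈ d ∨ v ∈ d}) ∨
        CoveredBy π (insert s(u, v) (M \ {d ∈ M | u ∈ d ∨ v ∈ d})) f) :=
  lfmm_insert_low_rank_general G π M u v huv hM hrank
end
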